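/- arXiv:2603.26217 — 4 statements merged into one kernel-verified Lean document; each statement's English description precedes it below -/
import Mathlib

section
/- Let x_1,…,x_d be i.i.d. Bernoulli(p) random variables, let n ≥ 2 with n−1 ≤ d, and set k = ⌊d/(n−1)⌋. Then for every T ∈ ℝ, the U-statistic U_d(h) = C(d,n−1)^{-1} Σ_{1 ≤ i_1 < ⋯ < i_{n-1} ≤ d} x_{i_1} ⋯ x_{i_{n-1}} satisfies E[ exp( T · U_d(h) ) ] ≤ ( 1 − p^{n-1} + p^{n-1} e^{T/k} )^k. -/
/-!
Following Hoeffding, split `k (n - 1)` of the `d` indices into `k` disjoint blocks of size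
`n - 1`. For every permutation `σ` of the indices, the mean `W_σ` of the `k` kernel values on the
permuted blocks is a mean of `k` i.i.d. Bernoulli(`p ^ (n - 1)`) variables, so
`E[exp (T W_σ)] = (1 - p ^ (n - 1) + p ^ (n - 1) e ^ (T / k)) ^ k`. Averaged over all `σ`, the
`W_σ` give back the U-statistic, since the permutations move every block uniformly over all
`(n - 1)`-subsets; Jensen's inequality for `exp` then bounds `E[exp (T U)]` by the average of the
`E[exp (T W_σ)]`.
-/

open Finset MeasureTheory ProbabilityTheory Real

section Permutations

variable {α R : Type*} [Fintype α] [CommSemiring R]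

lemma Finset.exists_perm_image_eq [DecidableEq α] {s t : Finset α} (h : #s = #t) :
    ∃ σ : Equiv.Perm α, s.image σ = t := by
  refine ⟨(equivOfCardEq h).extendSubtype, eq_of_subset_of_card_le ?_ ?_⟩
  · intro _ hy
    obtain ⟨a, ha, rfl⟩ := mem_image.mp hy
    exact (equivOfCardEq h).extendSubtype_mem a ha
  · rw [card_image_of_injective _ (Equiv.injective _), h]

lemma sum_powersetCard_prod_comp_perm (σ : Equiv.Perm α) (v : α → R) (m : ℕ) :
    ∑ t ∈ powersetCard m univ, ∏ i ∈ t, v (σ i) =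
      ∑ t ∈ powersetCard m univ, ∏ i ∈ t, v i := by
  conv_rhs => rw [← map_univ_equiv σ, powersetCard_map, sum_map]
  simp [prod_map]

lemma sum_perm_prod_comp_eq_of_card_eq [DecidableEq α] (v : α → R) {s t : Finset α}
    (h : #s = #t) :
    ∑ σ : Equiv.Perm α, ∏ i ∈ s, v (σ i) =
      ∑ σ : Equiv.Perm α, ∏ i ∈ t, v (σ i) := by
  obtain ⟨τ, rfl⟩ := exists_perm_image_eq h
  simp_rw [prod_image fun a _ b _ hab => τ.injective hab]
  exact (Equiv.sum_comp (Equiv.mulRight τ) fun ρ : Equiv.Perm α => ∏ i ∈ s, v (ρ i)).symm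

lemma choose_nsmul_sum_perm_prod_comp [DecidableEq α] (v : α → R) {B : Finset α} {m : ℕ}
    (hB : #B = m) :
    (Fintype.card α).choose m • ∑ σ : Equiv.Perm α, ∏ i ∈ B, v (σ i) =
      Fintype.card (Equiv.Perm α) • ∑ t ∈ powersetCard m univ, ∏ i ∈ t, v i := by
  calc (Fintype.card α).choose m • ∑ σ : Equiv.Perm α, ∏ i ∈ B, v (σ i)
      = ∑ t ∈ powersetCard m univ, ∑ σ : Equiv.Perm α, ∏ i ∈ t, v (σ i) := by
        rw [← card_univ, ← card_powersetCard, ← sum_const]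
        refine sum_congr rfl fun t ht => sum_perm_prod_comp_eq_of_card_eq v ?_
        rw [hB, (mem_powersetCard.mp ht).2]
    _ = Fintype.card (Equiv.Perm α) • ∑ t ∈ powersetCard m univ, ∏ i ∈ t, v i := by
        rw [sum_comm, ← card_univ, ← sum_const]
        exact sum_congr rfl fun σ _ => sum_powersetCard_prod_comp_perm σ v m

end Permutations

lemma exp_average_le {β : Type*} [Fintype β] [Nonempty β] (f : β → ℝ) :
    exp ((Fintype.card β : ℝ)⁻¹ * ∑ b, f b) ≤
      (Fintype.card β : ℝ)⁻¹ * ∑ b, exp (f b) := by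
  have hw : ∑ _b : β, (Fintype.card β : ℝ)⁻¹ = 1 := by
    rw [sum_const, card_univ, nsmul_eq_mul, mul_inv_cancel₀ (by positivity)]
  simpa only [mul_sum, smul_eq_mul] using
    convexOn_exp.map_sum_le (fun b _ => by positivity) hw fun b _ => Set.mem_univ (f b)

section UStatistic

variable {α κ ι : Type*} [Fintype α] [Fintype κ] [Fintype ι]

noncomputable def prodUStat (m : ℕ) (v : α → ℝ) : ℝ :=
  ((Fintype.card α).choose m : ℝ)⁻¹ * ∑ s ∈ powersetCard m univ, ∏ i ∈ s, v i

/-- With the indices arranged as pairs `(j, i)`, block `j` being `{j} × ι`, the quantity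
`blockMean fun c => v (σ (e c))` is Hoeffding's mean of the kernel over the permuted blocks. -/
noncomputable def blockMean (w : κ × ι → ℝ) : ℝ :=
  (Fintype.card κ : ℝ)⁻¹ * ∑ j, ∏ i, w (j, i)

lemma prodUStat_card_eq_average_prod_comp_perm [DecidableEq α] (v : α → ℝ) (B : Finset α) :
    prodUStat #B v = (Fintype.card (Equiv.Perm α) : ℝ)⁻¹ *
      ∑ σ : Equiv.Perm α, ∏ i ∈ B, v (σ i) := by
  have hchoose : ((Fintype.card α).choose #B : ℝ) ≠ 0 :=
    Nat.cast_ne_zero.mpr (Nat.choose_pos (card_le_univ B)).ne'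
  have key := choose_nsmul_sum_perm_prod_comp v (m := #B) rfl
  simp only [nsmul_eq_mul] at key
  have hperm : (Fintype.card (Equiv.Perm α) : ℝ) ≠ 0 :=
    Nat.cast_ne_zero.mpr Fintype.card_ne_zero
  rw [prodUStat, inv_mul_eq_iff_eq_mul₀ hchoose, mul_left_comm, key,
    inv_mul_cancel_left₀ hperm]

lemma prodUStat_eq_average_blockMean [DecidableEq α] [Nonempty κ] (e : κ × ι ↪ α)
    (v : α → ℝ) :
    prodUStat (Fintype.card ι) v = (Fintype.card (Equiv.Perm α) : ℝ)⁻¹ *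
      ∑ σ : Equiv.Perm α, blockMean fun c => v (σ (e c)) := by
  have hblock (j : κ) : (Fintype.card (Equiv.Perm α) : ℝ)⁻¹ *
      ∑ σ : Equiv.Perm α, ∏ i, v (σ (e (j, i))) = prodUStat (Fintype.card ι) v := by
    let B := univ.map ((Function.Embedding.sectR j ι).trans e)
    simpa [B, prod_map] using (prodUStat_card_eq_average_prod_comp_perm v B).symm
  have hκ : (Fintype.card κ : ℝ) ≠ 0 := Nat.cast_ne_zero.mpr Fintype.card_ne_zero
  calc prodUStat (Fintype.card ι) v
        = (Fintype.card κ : ℝ)⁻¹ * ∑ _j : κ, prodUStat (Fintype.card ι) v := by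
        rw [sum_const, card_univ, nsmul_eq_mul, inv_mul_cancel_left₀ hκ]
    _ = (Fintype.card κ : ℝ)⁻¹ * ∑ j : κ, (Fintype.card (Equiv.Perm α) : ℝ)⁻¹ *
          ∑ σ : Equiv.Perm α, ∏ i, v (σ (e (j, i))) := by
        rw [sum_congr rfl fun j _ => (hblock j).symm]
    _ = _ := by
        simp only [blockMean, mul_sum]
        rw [sum_comm]
        simp only [mul_left_comm]

lemma exp_mul_prodUStat_le [DecidableEq α] [Nonempty κ] (e : κ × ι ↪ α) (v : α → ℝ)
    (t : ℝ) :
    exp (t * prodUStat (Fintype.card ι) v) ≤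
      (Fintype.card (Equiv.Perm α) : ℝ)⁻¹ *
        ∑ σ : Equiv.Perm α, exp (t * blockMean fun c => v (σ (e c))) := by
  rw [prodUStat_eq_average_blockMean e, mul_left_comm, mul_sum]
  exact exp_average_le _

lemma exp_mul_eq_one_add_of_eq_zero_or_eq_one {z : ℝ} (hz : z = 0 ∨ z = 1) (c : ℝ) :
    exp (c * z) = 1 + (exp c - 1) * z := by
  rcases hz with rfl | rfl <;> simp

lemma prod_eq_zero_or_eq_one {β : Type*} {w : β → ℝ} (hw : ∀ b, w b = 0 ∨ w b = 1)
    (s : Finset β) : ∏ b ∈ s, w b = 0 ∨ ∏ b ∈ s, w b = 1 := by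
  refine prod_induction _ (fun z => z = 0 ∨ z = 1) ?_ (Or.inr rfl) fun b _ => hw b
  rintro a b (rfl | rfl) (rfl | rfl) <;> simp

lemma exp_mul_blockMean_eq_sum_powerset [DecidableEq κ] (w : κ × ι → ℝ)
    (hw : ∀ c, w c = 0 ∨ w c = 1) (t : ℝ) :
    exp (t * blockMean w) = ∑ s ∈ (univ : Finset κ).powerset,
      (exp (t / Fintype.card κ) - 1) ^ #s * ∏ c ∈ s ×ˢ univ, w c := by
  have hsplit : t * blockMean w = ∑ j, t / Fintype.card κ * ∏ i, w (j, i) := by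
    rw [blockMean, ← mul_assoc, mul_sum, div_eq_mul_inv]
  have hfactor (j : κ) : exp (t / Fintype.card κ * ∏ i, w (j, i)) =
      1 + (exp (t / Fintype.card κ) - 1) * ∏ i, w (j, i) :=
    exp_mul_eq_one_add_of_eq_zero_or_eq_one (prod_eq_zero_or_eq_one (fun i => hw (j, i)) univ) _
  rw [hsplit, exp_sum]
  simp only [hfactor, prod_one_add, prod_mul_distrib, prod_const, prod_product]

end UStatistic

section Bernoulli

variable {ι Ω : Type*} {x : ι → Ω → ℕ}

lemma prod_natCast_eq_indicator (h01 : ∀ i ω, x i ω ≤ 1) (u : Finset ι) :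
    (fun ω => ∏ i ∈ u, (x i ω : ℝ)) = (⋂ i ∈ u, x i ⁻¹' {1}).indicator 1 := by
  classical
  ext ω
  simp only [Set.indicator_apply, Set.mem_iInter₂, Set.mem_preimage, Set.mem_singleton_iff,
    Pi.one_apply]
  split_ifs with hω
  · exact prod_eq_one fun i hi => by simp [hω i hi]
  · obtain ⟨i, hi, hne⟩ : ∃ i ∈ u, x i ω ≠ 1 := by simpa using hω
    have hzero : x i ω = 0 := by have := h01 i ω; omega
    exact prod_eq_zero hi (by simp [hzero])

variable [MeasurableSpace Ω] {P : Measure Ω}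

lemma measurableSet_biInter_preimage_one (hmeas : ∀ i, Measurable (x i)) (u : Finset ι) :
    MeasurableSet (⋂ i ∈ u, x i ⁻¹' {1}) :=
  MeasurableSet.biInter u.countable_toSet fun i _ => hmeas i (measurableSet_singleton 1)

lemma integrable_prod_natCast [IsFiniteMeasure P] (hmeas : ∀ i, Measurable (x i))
    (h01 : ∀ i ω, x i ω ≤ 1) (u : Finset ι) :
    Integrable (fun ω => ∏ i ∈ u, (x i ω : ℝ)) P := by
  rw [prod_natCast_eq_indicator h01]
  exact (integrable_const 1).indicator (measurableSet_biInter_preimage_one hmeas u)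

lemma integral_prod_natCast {p : ℝ} (hp0 : 0 ≤ p) (hmeas : ∀ i, Measurable (x i))
    (h01 : ∀ i ω, x i ω ≤ 1) (hindep : iIndepFun (m := fun _ => ⊤) x P)
    (hber : ∀ i, P {ω | x i ω = 1} = ENNReal.ofReal p) (u : Finset ι) :
    ∫ ω, ∏ i ∈ u, (x i ω : ℝ) ∂P = p ^ #u := by
  have hber' : ∀ i, P (x i ⁻¹' {1}) = ENNReal.ofReal p := hber
  have hinter : P (⋂ i ∈ u, x i ⁻¹' {1}) = ENNReal.ofReal p ^ #u := by
    rw [hindep.meas_biInter fun i _ => ⟨{1}, trivial, rfl⟩, prod_congr rfl fun i _ => hber' i,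
      prod_const]
  rw [prod_natCast_eq_indicator h01,
    integral_indicator_one (measurableSet_biInter_preimage_one hmeas u), measureReal_def, hinter,
    ENNReal.toReal_pow, ENNReal.toReal_ofReal hp0]

end Bernoulli

section BlockMean

variable {κ ι Ω : Type*} [Fintype κ] [Fintype ι] [DecidableEq κ] {y : κ × ι → Ω → ℕ}

lemma exp_mul_blockMean_natCast_eq_sum_powerset (h01 : ∀ c ω, y c ω ≤ 1) (t : ℝ) :
    (fun ω => exp (t * blockMean fun c => (y c ω : ℝ))) = fun ω =>
      ∑ s ∈ (univ : Finset κ).powerset,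
        (exp (t / Fintype.card κ) - 1) ^ #s * ∏ c ∈ s ×ˢ univ, (y c ω : ℝ) := by
  ext ω
  refine exp_mul_blockMean_eq_sum_powerset _ (fun c => ?_) t
  rcases Nat.le_one_iff_eq_zero_or_eq_one.mp (h01 c ω) with h | h <;> simp [h]

variable [MeasurableSpace Ω] {P : Measure Ω} [IsProbabilityMeasure P]

lemma integrable_exp_mul_blockMean (hmeas : ∀ c, Measurable (y c)) (h01 : ∀ c ω, y c ω ≤ 1)
    (t : ℝ) : Integrable (fun ω => exp (t * blockMean fun c => (y c ω : ℝ))) P := by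
  rw [exp_mul_blockMean_natCast_eq_sum_powerset h01]
  exact integrable_finsetSum _ fun s _ => (integrable_prod_natCast hmeas h01 _).const_mul _

lemma integral_exp_mul_blockMean {p : ℝ} (hp0 : 0 ≤ p) (hmeas : ∀ c, Measurable (y c))
    (h01 : ∀ c ω, y c ω ≤ 1) (hindep : iIndepFun (m := fun _ => ⊤) y P)
    (hber : ∀ c, P {ω | y c ω = 1} = ENNReal.ofReal p) (t : ℝ) :
    ∫ ω, exp (t * blockMean fun c => (y c ω : ℝ)) ∂P =
      (1 - p ^ Fintype.card ι + p ^ Fintype.card ι * exp (t / Fintype.card κ)) ^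
        Fintype.card κ := by
  rw [exp_mul_blockMean_natCast_eq_sum_powerset h01,
    integral_finsetSum _ fun s _ => (integrable_prod_natCast hmeas h01 _).const_mul _]
  simp only [integral_const_mul, integral_prod_natCast hp0 hmeas h01 hindep hber, card_product,
    card_univ, pow_mul', ← mul_pow]
  rw [sum_congr rfl fun s _ => (prod_const _).symm, ← prod_one_add, prod_const, card_univ]
  ring

end BlockMean

theorem ustatistic_mgf_bound_general
    (d n : ℕ) (hn : 2 ≤ n) (hd : n - 1 ≤ d)
    (p : ℝ) (hp0 : 0 ≤ p)
    (Ω : Type*) [MeasurableSpace Ω] (P : Measure Ω) [IsProbabilityMeasure P]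
    (x : Fin d → Ω → ℕ)
    (hmeas : ∀ i, Measurable (x i))
    (h01 : ∀ i ω, x i ω ≤ 1)
    (hindep : iIndepFun (m := fun _ => ⊤) x P)
    (hber : ∀ i, P {ω | x i ω = 1} = ENNReal.ofReal p)
    (T : ℝ) :
    (∫ ω, Real.exp (T * ((d.choose (n - 1) : ℝ)⁻¹ *
        ∑ s ∈ Finset.powersetCard (n - 1) (Finset.univ : Finset (Fin d)),
          ∏ i ∈ s, (x i ω : ℝ))) ∂P)
      ≤ (1 - p ^ (n - 1) + p ^ (n - 1) * Real.exp (T / ((d / (n - 1) : ℕ) : ℝ)))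
          ^ (d / (n - 1) : ℕ) := by
  set k := d / (n - 1)
  set bound := (1 - p ^ (n - 1) + p ^ (n - 1) * exp (T / k)) ^ k
  have : Nonempty (Fin k) := Fin.pos_iff_nonempty.mp (Nat.div_pos hd (by omega))
  obtain ⟨e⟩ : Nonempty (Fin k × Fin (n - 1) ↪ Fin d) :=
    Function.Embedding.nonempty_of_card_le (by simpa using Nat.div_mul_le_self d (n - 1))
  have hblock (σ : Equiv.Perm (Fin d)) :
      ∫ ω, exp (T * blockMean fun c => (x (σ (e c)) ω : ℝ)) ∂P = bound := by
    simpa using integral_exp_mul_blockMean hp0 (fun c => hmeas _) (fun c => h01 _)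
      (hindep.precomp (σ.injective.comp e.injective)) (fun c => hber _) T
  have hintegrable (σ : Equiv.Perm (Fin d)) :
      Integrable (fun ω => exp (T * blockMean fun c => (x (σ (e c)) ω : ℝ))) P :=
    integrable_exp_mul_blockMean (fun c => hmeas _) (fun c => h01 _) T
  calc _ = ∫ ω, exp (T * prodUStat (Fintype.card (Fin (n - 1))) fun i => (x i ω : ℝ)) ∂P :=
        by simp [prodUStat]
    _ ≤ ∫ ω, (Fintype.card (Equiv.Perm (Fin d)) : ℝ)⁻¹ *
          ∑ σ : Equiv.Perm (Fin d), exp (T * blockMean fun c => (x (σ (e c)) ω : ℝ)) ∂P :=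
        integral_mono_of_nonneg (ae_of_all _ fun ω => (exp_pos _).le)
          ((integrable_finsetSum _ fun σ _ => hintegrable σ).const_mul _)
          (ae_of_all _ fun ω => exp_mul_prodUStat_le e _ T)
    _ = bound := by
        rw [integral_const_mul, integral_finsetSum _ fun σ _ => hintegrable σ]
        simp only [hblock, sum_const, card_univ, nsmul_eq_mul]
        exact inv_mul_cancel_left₀ (Nat.cast_ne_zero.mpr Fintype.card_ne_zero) bound

/-- **Hoeffding's moment-generating-function bound for the product-kernel U-statistic.**
Let `x₁, …, x_d` be i.i.d. Bernoulli(p) random variables, `n ≥ 2` with `n − 1 ≤ d`, and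
`k = ⌊d/(n−1)⌋`.  Then for every `T ∈ ℝ`, the U-statistic
`U_d(h) = C(d, n−1)⁻¹ ∑_{1 ≤ i₁ < ⋯ < i_{n-1} ≤ d} x_{i₁} ⋯ x_{i_{n-1}}` satisfies
`E[exp(T U_d(h))] ≤ (1 − p^{n-1} + p^{n-1} e^{T/k})^k`. -/
theorem ustatistic_mgf_bound
    (d n : ℕ) (hn : 2 ≤ n) (hd : n - 1 ≤ d)
    (p : ℝ) (hp0 : 0 ≤ p) (hp1 : p ≤ 1)
    (Ω : Type*) [MeasurableSpace Ω] (P : Measure Ω) [IsProbabilityMeasure P]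
    (x : Fin d → Ω → ℕ)
    (hmeas : ∀ i, Measurable (x i))
    (h01 : ∀ i ω, x i ω ≤ 1)
    (hindep : iIndepFun (m := fun _ => ⊤) x P)
    (hber : ∀ i, P {ω | x i ω = 1} = ENNReal.ofReal p)
    (T : ℝ) :
    (∫ ω, Real.exp (T * ((d.choose (n - 1) : ℝ)⁻¹ *
        ∑ s ∈ Finset.powersetCard (n - 1) (Finset.univ : Finset (Fin d)),
          ∏ i ∈ s, (x i ω : ℝ))) ∂P)
      ≤ (1 - p ^ (n - 1) + p ^ (n - 1) * Real.exp (T / ((d / (n - 1) : ℕ) : ℝ)))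
          ^ (d / (n - 1) : ℕ) :=
  ustatistic_mgf_bound_general d n hn hd p hp0 Ω P x hmeas h01 hindep hber T
end

section
/- Fix n ≥ 2 and d ≥ n−1, set k = ⌊d/(n−1)⌋, and let p ∈ (0,1). Let (ξ_j^μ)_{1 ≤ j ≤ N, 2 ≤ μ ≤ M} be i.i.d. Bernoulli(p) random variables and fix an index i > d. Then for every t ≥ 0 and every h > 0, P( Σ*_{i_1,…,i_{n-1} ≤ d} Σ_{μ=2}^M ξ_i^μ ξ_{i_1}^μ ⋯ ξ_{i_{n-1}}^μ ≥ h ) ≤ exp( −t h + M p [ ( 1 − p^{n-1} + p^{n-1} exp( t (n−1)! C(d,n−1) / k ) )^k − 1 ] ), where Σ* runs over ordered tuples of pairwise distinct indices i_1,…,i_{n-1} in {1,…,d}. -/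
/-!
Markov's inequality for `e^{tS}` reduces the bound to the moment generating function of the
false field `S = ∑_μ ξ_i^μ Y_μ`, where `Y_μ = ∑* ξ_{i₁}^μ ⋯ ξ_{i_{n-1}}^μ` is a U-statistic of the
pattern `μ`. The patterns are independent, so the mgf factorises over `μ`; as `i > d`, `ξ_i^μ` is
a Bernoulli(p) variable independent of `Y_μ`, so each factor is
`1 + p (E e^{tY_μ} - 1) ≤ exp (p (E e^{tY_μ} - 1))`.

Hoeffding's argument bounds `E e^{tY}`: choose `k = ⌊d/(n-1)⌋` disjoint blocks of `n - 1` of the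
`d` coordinates. Averaged over all permutations `σ` of the coordinates, `Y` is the mean of
`(|T|/k) ∑_j B_{σ,j}`, where `|T| = (n-1)! C(d,n-1)` counts the tuples and `B_{σ,j}` is the
product over the `σ`-image of block `j`. By Jensen's inequality for `exp`, `E e^{tY}` is at most
the average of `E e^{(t|T|/k) ∑_j B_{σ,j}}`, and the `B_{σ,j}` are independent Bernoulli(`p^{n-1}`)
variables, so each of these expectations is `(1 - p^{n-1} + p^{n-1} e^{t|T|/k})^k`.
-/

open MeasureTheory ProbabilityTheory Finset Function

namespace ProbabilityTheory

variable {Ω ι κ β γ : Type*} {mΩ : MeasurableSpace Ω} {P : Measure Ω} [MeasurableSpace β]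

lemma iIndepFun.curry {X : ι → κ → Ω → β} (mX : ∀ i j, Measurable (X i j))
    (h : iIndepFun (fun p : ι × κ ↦ X p.1 p.2) P) :
    iIndepFun (fun i ω j ↦ X i j ω) P := by
  have := h.isProbabilityMeasure
  have _ i j := Measure.isProbabilityMeasure_map (μ := P) (mX i j).aemeasurable
  have mrow (i : ι) : Measurable fun ω j ↦ X i j ω := measurable_pi_lambda _ (mX i)
  have hrow (i : ι) :
      P.map (fun ω j ↦ X i j ω) = Measure.infinitePi (fun j ↦ P.map (X i j)) :=
    (h.precomp (Prod.mk_right_injective i)).map_fun_eq_infinitePi_map (mX i)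
  have hjoint : (fun ω i j ↦ X i j ω) =
      MeasurableEquiv.curry ι κ β ∘ fun ω (p : ι × κ) ↦ X p.1 p.2 ω := rfl
  rw [iIndepFun_iff_map_fun_eq_infinitePi_map mrow]
  simp_rw [hrow]
  rw [hjoint, ← Measure.map_map (MeasurableEquiv.measurable _)
      (measurable_pi_lambda (fun ω (p : ι × κ) ↦ X p.1 p.2 ω) fun p ↦ mX p.1 p.2),
    h.map_fun_eq_infinitePi_map (X := fun p : ι × κ ↦ X p.1 p.2) fun p ↦ mX p.1 p.2,
    Measure.infinitePi_map_curry (fun i j ↦ P.map (X i j))]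

lemma iIndepFun.indepFun_comp_embedding [MeasurableSpace γ] [Fintype κ] {X : ι → Ω → β}
    (hX : iIndepFun X P) (hXm : ∀ i, Measurable (X i)) (g : κ ↪ ι) {i : ι}
    (hi : ∀ j, g j ≠ i) {φ : (κ → β) → γ} (hφ : Measurable φ) :
    IndepFun (X i) (fun ω ↦ φ fun j ↦ X (g j) ω) P :=
  (hX.indepFun_finset {i} (univ.map g) (by simpa [disjoint_singleton_left] using hi) hXm).comp
    (measurable_pi_apply (⟨i, mem_singleton_self i⟩ : ({i} : Finset ι)))
    (hφ.comp (measurable_pi_lambda _ fun j ↦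
      measurable_pi_apply (⟨g j, mem_map_of_mem g (mem_univ j)⟩ : univ.map g)))

lemma iIndepFun.mgf_sum_le_exp {X : ι → Ω → ℝ} (hX : iIndepFun X P) (hXm : ∀ i, Measurable (X i))
    (s : Finset ι) {t c : ℝ} (hc : ∀ i ∈ s, mgf (X i) P t ≤ Real.exp c) :
    mgf (∑ i ∈ s, X i) P t ≤ Real.exp (#s * c) := by
  rw [hX.mgf_sum hXm, Real.exp_nat_mul, ← prod_const]
  exact prod_le_prod (fun _ _ ↦ mgf_nonneg) hc

lemma measure_ge_le_ofReal_exp_of_mgf_le [IsFiniteMeasure P] {X : Ω → ℝ} {t c : ℝ} (ε : ℝ)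
    (ht : 0 ≤ t) (hint : Integrable (fun ω ↦ Real.exp (t * X ω)) P) (hc : mgf X P t ≤ Real.exp c) :
    P {ω | ε ≤ X ω} ≤ ENNReal.ofReal (Real.exp (-(t * ε) + c)) := by
  rw [← ofReal_measureReal]
  gcongr
  calc P.real {ω | ε ≤ X ω} ≤ Real.exp (-t * ε) * mgf X P t :=
        measure_ge_le_exp_mul_mgf ε ht hint
    _ ≤ Real.exp (-t * ε) * Real.exp c := by gcongr
    _ = Real.exp (-(t * ε) + c) := by rw [← Real.exp_add, neg_mul]

end ProbabilityTheory

section Bernoulli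

variable {Ω α : Type*} {mΩ : MeasurableSpace Ω} {P : Measure Ω}

lemma integral_natCast_of_le_one [IsFiniteMeasure P] {B : Ω → ℕ} (hB : Measurable B)
    (hB1 : ∀ ω, B ω ≤ 1) : ∫ ω, (B ω : ℝ) ∂P = P.real {ω | B ω = 1} := by
  have hind : (fun ω ↦ (B ω : ℝ)) = {ω | B ω = 1}.indicator 1 := by
    ext ω
    rcases Nat.le_one_iff_eq_zero_or_eq_one.1 (hB1 ω) with h | h <;> simp [h]
  rw [hind]
  exact integral_indicator_one (hB (measurableSet_singleton 1))

lemma exp_natCast_mul_of_le_one {b : ℕ} (hb : b ≤ 1) (z : ℝ) :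
    Real.exp (b * z) = 1 + b * (Real.exp z - 1) := by
  rcases Nat.le_one_iff_eq_zero_or_eq_one.1 hb with rfl | rfl <;> simp

lemma integral_exp_natCast_mul_of_indepFun [IsProbabilityMeasure P] {B : Ω → ℕ} {Z : Ω → ℝ}
    (hB : Measurable B) (hZ : Measurable Z) (hB1 : ∀ ω, B ω ≤ 1) (hind : IndepFun B Z P)
    (hint : Integrable (fun ω ↦ Real.exp (Z ω)) P) :
    ∫ ω, Real.exp (B ω * Z ω) ∂P =
      1 + (∫ ω, (B ω : ℝ) ∂P) * ((∫ ω, Real.exp (Z ω) ∂P) - 1) := by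
  have hBm : Measurable fun ω ↦ (B ω : ℝ) := measurable_from_nat.comp hB
  have hWm : Measurable fun ω ↦ Real.exp (Z ω) - 1 := (Real.measurable_exp.comp hZ).sub_const 1
  have hind' : IndepFun (fun ω ↦ (B ω : ℝ)) (fun ω ↦ Real.exp (Z ω) - 1) P :=
    hind.comp measurable_from_nat (Real.measurable_exp.sub_const 1)
  have hprod : Integrable (fun ω ↦ (B ω : ℝ) * (Real.exp (Z ω) - 1)) P :=
    (hint.sub (integrable_const 1)).bdd_mul hBm.aestronglyMeasurable
      (c := 1) (ae_of_all _ fun ω ↦ by simpa using hB1 ω)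
  simp_rw [exp_natCast_mul_of_le_one (hB1 _)]
  rw [integral_add (integrable_const 1) hprod,
    hind'.integral_fun_mul_eq_mul_integral hBm.aestronglyMeasurable hWm.aestronglyMeasurable,
    integral_sub hint (integrable_const 1)]
  simp

lemma integrable_comp_of_le_one {ι : Type*} [Finite ι] [IsFiniteMeasure P] {V : Ω → ι → ℕ}
    (hV : Measurable V) (hV1 : ∀ ω x, V ω x ≤ 1) (φ : (ι → ℕ) → ℝ) :
    Integrable (fun ω ↦ φ (V ω)) P := by
  obtain ⟨C, hC⟩ : BddAbove ((fun v ↦ ‖φ v‖) '' Set.univ.pi fun _ ↦ Set.Iic 1) :=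
    ((Set.Finite.pi fun _ ↦ Set.finite_Iic 1).image _).bddAbove
  exact .of_bound ((measurable_of_countable φ).comp hV).aestronglyMeasurable C
    (ae_of_all _ fun ω ↦ hC ⟨V ω, fun x _ ↦ hV1 ω x, rfl⟩)

variable {X : α → Ω → ℕ} {p : ℝ}

lemma integral_prod_natCast_of_iIndepFun {β : Type*} [Fintype β] (hXm : ∀ x, Measurable (X x))
    (hX1 : ∀ x ω, X x ω ≤ 1) (hind : iIndepFun X P) (hp : 0 ≤ p)
    (hber : ∀ x, P {ω | X x ω = 1} = ENNReal.ofReal p) (e : β ↪ α) :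
    ∫ ω, ((∏ l, X (e l) ω : ℕ) : ℝ) ∂P = p ^ Fintype.card β := by
  have := hind.isProbabilityMeasure
  have hreal : iIndepFun (fun l ω ↦ (X (e l) ω : ℝ)) P :=
    (hind.precomp e.injective).comp (fun _ (b : ℕ) ↦ (b : ℝ)) fun _ ↦ measurable_from_nat
  push_cast
  rw [hreal.integral_fun_prod_eq_prod_integral
    fun l ↦ (measurable_from_nat.comp (hXm (e l))).aestronglyMeasurable]
  simp_rw [integral_natCast_of_le_one (hXm _) (hX1 _), measureReal_def, hber,
    ENNReal.toReal_ofReal hp, prod_const, card_univ]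

lemma integral_exp_mul_sum_prod_eq_pow {κ β : Type*} [Fintype κ] [Fintype β]
    (hXm : ∀ x, Measurable (X x)) (hX1 : ∀ x ω, X x ω ≤ 1) (hind : iIndepFun X P) (hp : 0 ≤ p)
    (hber : ∀ x, P {ω | X x ω = 1} = ENNReal.ofReal p) (q : κ × β ↪ α) (a : ℝ) :
    ∫ ω, Real.exp (a * ∑ j, ((∏ l, X (q (j, l)) ω : ℕ) : ℝ)) ∂P =
      (1 - p ^ Fintype.card β + p ^ Fintype.card β * Real.exp a) ^ Fintype.card κ := by
  have := hind.isProbabilityMeasure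
  have hBm (j : κ) : Measurable fun ω ↦ ∏ l, X (q (j, l)) ω :=
    Finset.measurable_prod _ fun l _ ↦ hXm _
  have hfactors : iIndepFun (fun j ω ↦ Real.exp (a * ((∏ l, X (q (j, l)) ω : ℕ) : ℝ))) P :=
    ((hind.precomp q.injective).curry fun _ _ ↦ hXm _).comp
      (fun _ v ↦ Real.exp (a * ((∏ l, v l : ℕ) : ℝ))) fun _ ↦ measurable_of_countable _
  have hblock (j : κ) : ∫ ω, Real.exp (a * ((∏ l, X (q (j, l)) ω : ℕ) : ℝ)) ∂P =
      1 - p ^ Fintype.card β + p ^ Fintype.card β * Real.exp a := by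
    have hmean : ∫ ω, ((∏ l, X (q (j, l)) ω : ℕ) : ℝ) ∂P = p ^ Fintype.card β :=
      integral_prod_natCast_of_iIndepFun hXm hX1 hind hp hber ((Embedding.sectR j β).trans q)
    simp_rw [mul_comm a]
    rw [integral_exp_natCast_mul_of_indepFun (Z := fun _ ↦ a) (hBm j) measurable_const
      (fun ω ↦ prod_le_one' fun l _ ↦ hX1 _ ω) (indepFun_const_right _ a) (integrable_const _),
      hmean]
    simp only [integral_const, probReal_univ, one_smul]
    ring
  simp_rw [mul_sum, Real.exp_sum]
  rw [hfactors.integral_fun_prod_eq_prod_integral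
    fun j ↦ ((measurable_from_nat.comp (hBm j)).const_mul a).exp.aestronglyMeasurable]
  simp_rw [hblock, prod_const, card_univ]

end Bernoulli

section Counting

variable {β α : Type*} [Fintype β] [Fintype α] [DecidableEq α]

lemma sum_perm_trans_eq_of_embedding {M : Type*} [AddCommMonoid M] (e e' : β ↪ α)
    (g : (β ↪ α) → M) :
    ∑ σ : Equiv.Perm α, g (e'.trans σ.toEmbedding) =
      ∑ σ : Equiv.Perm α, g (e.trans σ.toEmbedding) := by
  obtain ⟨τ, hτ⟩ := Equiv.Perm.exists_extending_pair e e' e.injective e'.injective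
  obtain rfl : e' = e.trans τ.toEmbedding := by ext; simp [hτ]
  exact Fintype.sum_equiv (Equiv.mulRight τ) _ _ fun σ ↦ rfl

lemma card_embedding_mul_sum_perm_trans (e : β ↪ α) (g : (β ↪ α) → ℝ) :
    Fintype.card (β ↪ α) * ∑ σ : Equiv.Perm α, g (e.trans σ.toEmbedding) =
      (Fintype.card α).factorial * ∑ e', g e' := by
  have hshift (σ : Equiv.Perm α) : ∑ e' : β ↪ α, g (e'.trans σ.toEmbedding) = ∑ e', g e' :=
    Fintype.sum_equiv ((Equiv.refl β).embeddingCongr σ) _ _ fun _ ↦ rfl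
  calc (Fintype.card (β ↪ α) : ℝ) * ∑ σ : Equiv.Perm α, g (e.trans σ.toEmbedding)
      = ∑ e' : β ↪ α, ∑ σ : Equiv.Perm α, g (e'.trans σ.toEmbedding) := by
        simp_rw [sum_perm_trans_eq_of_embedding e, sum_const, card_univ, nsmul_eq_mul]
    _ = ∑ σ : Equiv.Perm α, ∑ e', g e' := by rw [sum_comm]; simp_rw [hshift]
    _ = (Fintype.card α).factorial * ∑ e', g e' := by simp [card_univ, Fintype.card_perm]

lemma card_mul_factorial_mul_sum_embedding {κ : Type*} [Fintype κ] (q : κ × β ↪ α)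
    (f : (β ↪ α) → ℝ) :
    Fintype.card κ * (Fintype.card α).factorial * ∑ e, f e =
      Fintype.card (β ↪ α) *
        ∑ σ : Equiv.Perm α, ∑ j, f (((Embedding.sectR j β).trans q).trans σ.toEmbedding) := by
  calc _ = ∑ _j : κ, ((Fintype.card α).factorial : ℝ) * ∑ e, f e := by
        simp [card_univ, mul_assoc]
    _ = ∑ j : κ, Fintype.card (β ↪ α) *
          ∑ σ : Equiv.Perm α, f (((Embedding.sectR j β).trans q).trans σ.toEmbedding) :=
        sum_congr rfl fun j _ ↦ (card_embedding_mul_sum_perm_trans _ f).symm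
    _ = _ := by rw [← mul_sum, sum_comm]

end Counting

lemma sum_injective_mem_range_eq_sum_embedding {β α γ M : Type*} [Fintype β] [Fintype α]
    [AddCommMonoid M] (g : α ↪ γ) {s : Finset (β → γ)}
    (hs : ∀ js, js ∈ s ↔ Injective js ∧ ∀ l, js l ∈ Set.range g) (f : (β → γ) → M) :
    ∑ js ∈ s, f js = ∑ e : β ↪ α, f (g ∘ e) := by
  refine (sum_bij (fun (e : β ↪ α) _ ↦ g ∘ e) (fun e _ ↦ (hs _).2 ⟨g.injective.comp e.injective,
    fun l ↦ ⟨e l, rfl⟩⟩) (fun e _ e' _ h ↦ ?_) (fun js hjs ↦ ?_) fun _ _ ↦ rfl).symm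
  · ext l
    exact congrArg (· l) (g.injective.comp_left h)
  · obtain ⟨hinj, hrange⟩ := (hs js).1 hjs
    choose e he using hrange
    refine ⟨⟨e, fun l l' hll' ↦ hinj (by rw [← he l, ← he l', hll'])⟩, mem_univ _, ?_⟩
    ext l
    exact he l

lemma exp_sum_div_card_le_sum_exp_div_card {ι : Type*} [Fintype ι] [Nonempty ι] (f : ι → ℝ) :
    Real.exp ((∑ i, f i) / Fintype.card ι) ≤ (∑ i, Real.exp (f i)) / Fintype.card ι := by
  have hw : ∑ _i : ι, (Fintype.card ι : ℝ)⁻¹ = 1 := by simp [card_univ]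
  simpa [div_eq_inv_mul, mul_sum] using
    convexOn_exp.map_sum_le (t := univ) (w := fun _ ↦ (Fintype.card ι : ℝ)⁻¹) (p := f)
      (fun _ _ ↦ by positivity) hw fun _ _ ↦ Set.mem_univ _

/-- `n.descFactorial m` counts the `m`-tuples of distinct elements of an `n`-set, and `n / m` is
the number of disjoint blocks of size `m` it contains. -/
noncomputable def hoeffdingBound (p t : ℝ) (m n : ℕ) : ℝ :=
  (1 - p ^ m + p ^ m * Real.exp (t * n.descFactorial m / (n / m : ℕ))) ^ (n / m)

lemma one_le_hoeffdingBound {p t : ℝ} (hp : 0 ≤ p) (ht : 0 ≤ t) (m n : ℕ) :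
    1 ≤ hoeffdingBound p t m n := by
  refine one_le_pow₀ ?_
  have : 1 ≤ Real.exp (t * n.descFactorial m / (n / m : ℕ)) := Real.one_le_exp (by positivity)
  nlinarith [pow_nonneg hp m]

section Hoeffding

variable {Ω : Type*} {mΩ : MeasurableSpace Ω} {P : Measure Ω} {p : ℝ}

theorem integral_exp_mul_sum_embedding_prod_le {α : Type*} [Fintype α] [DecidableEq α]
    {X : α → Ω → ℕ} (hXm : ∀ x, Measurable (X x)) (hX1 : ∀ x ω, X x ω ≤ 1)
    (hind : iIndepFun X P) (hp : 0 ≤ p) (hber : ∀ x, P {ω | X x ω = 1} = ENNReal.ofReal p)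
    {m : ℕ} (hk : 0 < Fintype.card α / m) (t : ℝ) :
    ∫ ω, Real.exp (t * ∑ e : Fin m ↪ α, ((∏ l, X (e l) ω : ℕ) : ℝ)) ∂P ≤
      hoeffdingBound p t m (Fintype.card α) := by
  have := hind.isProbabilityMeasure
  set k := Fintype.card α / m
  set a := t * (Fintype.card α).descFactorial m / k
  obtain ⟨q⟩ : Nonempty (Fin k × Fin m ↪ α) :=
    Embedding.nonempty_of_card_le (by simpa using Nat.div_mul_le_self _ m)
  let V (ω : Ω) : α → ℕ := fun x ↦ X x ω
  let U (e : Fin m ↪ α) (v : α → ℕ) : ℝ := ((∏ l, v (e l) : ℕ) : ℝ)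
  let Z (σ : Equiv.Perm α) (v : α → ℕ) : ℝ :=
    a * ∑ j, U (((Embedding.sectR j (Fin m)).trans q).trans σ.toEmbedding) v
  have hZ (σ : Equiv.Perm α) : ∫ ω, Real.exp (Z σ (V ω)) ∂P = _ :=
    integral_exp_mul_sum_prod_eq_pow hXm hX1 hind hp hber (q.trans σ.toEmbedding) a
  simp only [Fintype.card_fin] at hZ
  have hint (φ : (α → ℕ) → ℝ) : Integrable (fun ω ↦ φ (V ω)) P :=
    integrable_comp_of_le_one (measurable_pi_lambda _ hXm) (fun ω x ↦ hX1 x ω) φ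
  have haverage (v : α → ℕ) :
      t * ∑ e, U e v = (∑ σ, Z σ v) / Fintype.card (Equiv.Perm α) := by
    have hcount := card_mul_factorial_mul_sum_embedding q (U · v)
    rw [Fintype.card_fin, Fintype.card_embedding_eq, Fintype.card_fin] at hcount
    rw [Fintype.card_perm, eq_div_iff (by positivity), ← mul_sum, div_mul_eq_mul_div,
      eq_div_iff (by positivity)]
    linear_combination t * hcount
  calc ∫ ω, Real.exp (t * ∑ e, U e (V ω)) ∂P
      ≤ ∫ ω, (∑ σ, Real.exp (Z σ (V ω))) / Fintype.card (Equiv.Perm α) ∂P := by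
        refine integral_mono (hint fun v ↦ Real.exp (t * ∑ e, U e v))
          ((integrable_finsetSum _ fun σ _ ↦ hint fun v ↦ Real.exp (Z σ v)).div_const _)
          fun ω ↦ ?_
        rw [haverage]
        exact exp_sum_div_card_le_sum_exp_div_card _
    _ = hoeffdingBound p t m (Fintype.card α) := by
        rw [integral_div, integral_finsetSum _ fun σ _ ↦ hint fun v ↦ Real.exp (Z σ v)]
        simp_rw [hZ]
        simp [card_univ, hoeffdingBound, a, k]

lemma mgf_natCast_mul_sum_embedding_prod_le {α γ : Type*} [Fintype α] [DecidableEq α]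
    {X : γ → Ω → ℕ} (hXm : ∀ x, Measurable (X x)) (hX1 : ∀ x ω, X x ω ≤ 1)
    (hind : iIndepFun X P) (hp : 0 ≤ p) (hber : ∀ x, P {ω | X x ω = 1} = ENNReal.ofReal p)
    (g : α ↪ γ) {i : γ} (hi : ∀ j, g j ≠ i) {m : ℕ} (hk : 0 < Fintype.card α / m) (t : ℝ) :
    mgf (fun ω ↦ X i ω * ∑ e : Fin m ↪ α, ((∏ l, X (g (e l)) ω : ℕ) : ℝ)) P t ≤
      Real.exp (p * (hoeffdingBound p t m (Fintype.card α) - 1)) := by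
  have := hind.isProbabilityMeasure
  set A := hoeffdingBound p t m (Fintype.card α)
  let Y (v : α → ℕ) : ℝ := ∑ e : Fin m ↪ α, ((∏ l, v (e l) : ℕ) : ℝ)
  let V (ω : Ω) (j : α) : ℕ := X (g j) ω
  have hV : Measurable V := measurable_pi_lambda _ fun j ↦ hXm (g j)
  have hY : ∫ ω, Real.exp (t * Y (V ω)) ∂P ≤ A :=
    integral_exp_mul_sum_embedding_prod_le (X := fun j ω ↦ X (g j) ω) (fun j ↦ hXm (g j))
      (fun j ↦ hX1 (g j)) (hind.precomp g.injective) hp (fun j ↦ hber (g j)) hk t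
  have hYm : Measurable fun ω ↦ t * Y (V ω) := (measurable_of_countable fun v ↦ t * Y v).comp hV
  have hYint : Integrable (fun ω ↦ Real.exp (t * Y (V ω))) P :=
    integrable_comp_of_le_one hV (fun ω j ↦ hX1 (g j) ω) fun v ↦ Real.exp (t * Y v)
  have hindY : IndepFun (X i) (fun ω ↦ t * Y (V ω)) P :=
    hind.indepFun_comp_embedding hXm g hi (measurable_of_countable fun v ↦ t * Y v)
  calc mgf (fun ω ↦ X i ω * Y (V ω)) P t
      = 1 + p * (∫ ω, Real.exp (t * Y (V ω)) ∂P - 1) := by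
        simp only [mgf, mul_left_comm t]
        rw [integral_exp_natCast_mul_of_indepFun (hXm i) hYm (hX1 i) hindY hYint,
          integral_natCast_of_le_one (hXm i) (hX1 i), measureReal_def, hber,
          ENNReal.toReal_ofReal hp]
    _ ≤ 1 + p * (A - 1) := by gcongr
    _ ≤ Real.exp (p * (A - 1)) := by linarith [Real.add_one_le_exp (p * (A - 1))]

theorem measure_ge_sum_natCast_mul_sum_embedding_prod_le {ι γ α : Type*} [Fintype ι] [Finite γ]
    [Fintype α] [DecidableEq α] {X : ι → γ → Ω → ℕ} (hXm : ∀ μ j, Measurable (X μ j))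
    (hX1 : ∀ μ j ω, X μ j ω ≤ 1) (hind : iIndepFun (fun x : ι × γ ↦ X x.1 x.2) P)
    (hp : 0 ≤ p) (hber : ∀ μ j, P {ω | X μ j ω = 1} = ENNReal.ofReal p) (g : α ↪ γ) {i : γ}
    (hi : ∀ j, g j ≠ i) {m : ℕ} (hk : 0 < Fintype.card α / m) (ε : ℝ) {t : ℝ} (ht : 0 ≤ t) :
    P {ω | ε ≤ ∑ μ, X μ i ω * ∑ e : Fin m ↪ α, ((∏ l, X μ (g (e l)) ω : ℕ) : ℝ)} ≤
      ENNReal.ofReal (Real.exp (-(t * ε) +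
        Fintype.card ι * (p * (hoeffdingBound p t m (Fintype.card α) - 1)))) := by
  have := hind.isProbabilityMeasure
  let Y (v : γ → ℕ) : ℝ := v i * ∑ e : Fin m ↪ α, ((∏ l, v (g (e l)) : ℕ) : ℝ)
  have hYm : Measurable Y := measurable_of_countable Y
  let F (μ : ι) (ω : Ω) : ℝ := Y fun j ↦ X μ j ω
  have hFm (μ : ι) : Measurable (F μ) := hYm.comp (measurable_pi_lambda _ (hXm μ))
  have hpatterns : iIndepFun F P := (hind.curry hXm).comp (fun _ ↦ Y) fun _ ↦ hYm
  have hint : Integrable (fun ω ↦ Real.exp (t * ∑ μ, F μ ω)) P :=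
    integrable_comp_of_le_one (V := fun ω (x : ι × γ) ↦ X x.1 x.2 ω)
      (measurable_pi_lambda _ fun x ↦ hXm x.1 x.2) (fun ω x ↦ hX1 x.1 x.2 ω)
      fun v ↦ Real.exp (t * ∑ μ, Y fun j ↦ v (μ, j))
  have hrow (μ : ι) : iIndepFun (fun j ω ↦ X μ j ω) P := hind.precomp (Prod.mk_right_injective μ)
  have := measure_ge_le_ofReal_exp_of_mgf_le ε ht (by simpa only [Finset.sum_apply] using hint)
    (hpatterns.mgf_sum_le_exp hFm univ fun μ _ ↦
      mgf_natCast_mul_sum_embedding_prod_le (hXm μ) (hX1 μ) (hrow μ) hp (hber μ) g hi hk t)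
  simpa only [Finset.sum_apply, card_univ] using this

end Hoeffding

open Classical in
theorem false_field_exponential_markov_general
    (N d n M : ℕ) (hn : 2 ≤ n) (hd : n - 1 ≤ d) (hdN : d < N)
    (p : ℝ) (hp0 : 0 < p)
    (Ω : Type*) [MeasurableSpace Ω] (P : Measure Ω) [IsProbabilityMeasure P]
    (ξ : Ω → Fin (M - 1) → Fin N → ℕ)
    (hmeas : ∀ μ j, Measurable fun ω => ξ ω μ j)
    (h01 : ∀ ω μ j, ξ ω μ j ≤ 1)
    (hindep : iIndepFun (m := fun _ => ⊤)
      (fun pr : Fin (M - 1) × Fin N => fun ω => ξ ω pr.1 pr.2) P)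
    (hber : ∀ μ j, P {ω | ξ ω μ j = 1} = ENNReal.ofReal p)
    (i : Fin N) (hi : d ≤ (i : ℕ))
    (t h : ℝ) (ht : 0 ≤ t) :
    P {ω | h ≤ (∑ js ∈ Finset.univ.filter (fun js : Fin (n - 1) → Fin N =>
          Function.Injective js ∧ ∀ k, (js k : ℕ) < d),
        ∑ μ, ξ ω μ i * ∏ k, ξ ω μ (js k) : ℝ)}
      ≤ ENNReal.ofReal (Real.exp (-(t * h) + M * p *
          ((1 - p ^ (n - 1) + p ^ (n - 1) *
              Real.exp (t * (n - 1).factorial * (d.choose (n - 1) : ℝ)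
                / ((d / (n - 1) : ℕ) : ℝ))) ^ (d / (n - 1) : ℕ) - 1))) := by
  let g : Fin d ↪ Fin N := Fin.castLEEmb hdN.le
  have hfield (ω : Ω) : (∑ js ∈ Finset.univ.filter (fun js : Fin (n - 1) → Fin N =>
        Function.Injective js ∧ ∀ k, (js k : ℕ) < d), ∑ μ, ξ ω μ i * ∏ k, ξ ω μ (js k) : ℝ) =
      ∑ μ, ξ ω μ i * ∑ e : Fin (n - 1) ↪ Fin d, ((∏ l, ξ ω μ (g (e l)) : ℕ) : ℝ) := by
    rw [sum_injective_mem_range_eq_sum_embedding g (fun js ↦ by simp [g, Fin.range_castLE]),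
      sum_comm]
    simp only [mul_sum]
    rfl
  have hbound := measure_ge_sum_natCast_mul_sum_embedding_prod_le (X := fun μ j ω ↦ ξ ω μ j)
    hmeas (fun μ j ω ↦ h01 ω μ j) hindep hp0.le hber g (i := i)
    (fun j hj ↦ by have := congrArg Fin.val hj; simp [g] at this; omega)
    (m := n - 1) (by rw [Fintype.card_fin]; exact Nat.div_pos hd (by omega)) h ht
  have hA := one_le_hoeffdingBound hp0.le ht (n - 1) d
  simp only [Fintype.card_fin] at hbound
  simp_rw [hfield]
  refine hbound.trans (ENNReal.ofReal_le_ofReal (Real.exp_le_exp.2 ?_))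
  rw [hoeffdingBound, Nat.descFactorial_eq_factorial_mul_choose, Nat.cast_mul, ← mul_assoc]
    at hA ⊢
  rw [← mul_assoc]
  gcongr
  omega

open Classical in
/-- **Exponential Markov bound for the false field at a zero coordinate.**
Let `n ≥ 2`, `n − 1 ≤ d`, `k = ⌊d/(n−1)⌋` and `p ∈ (0,1)`.  Let `(ξ_j^μ)_{1≤j≤N, 2≤μ≤M}`
be i.i.d. Bernoulli(p) random variables and let `i` be an index outside `{1, …, d}`.
Then for every `t ≥ 0` and `h > 0`,
`P(∑*_{i₁,…,i_{n-1} ≤ d} ∑_{μ=2}^M ξ_i^μ ξ_{i₁}^μ ⋯ ξ_{i_{n-1}}^μ ≥ h)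
  ≤ exp(−t h + M p [(1 − p^{n-1} + p^{n-1} exp(t (n−1)! C(d,n−1)/k))^k − 1])`,
where `∑*` runs over ordered tuples of pairwise distinct indices in `{1, …, d}`. -/
theorem false_field_exponential_markov
    (N d n M : ℕ) (hn : 2 ≤ n) (hd : n - 1 ≤ d) (hdN : d < N) (hM : 2 ≤ M)
    (p : ℝ) (hp0 : 0 < p) (hp1 : p < 1)
    (Ω : Type*) [MeasurableSpace Ω] (P : Measure Ω) [IsProbabilityMeasure P]
    (ξ : Ω → Fin (M - 1) → Fin N → ℕ)
    (hmeas : ∀ μ j, Measurable fun ω => ξ ω μ j)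
    (h01 : ∀ ω μ j, ξ ω μ j ≤ 1)
    (hindep : iIndepFun (m := fun _ => ⊤)
      (fun pr : Fin (M - 1) × Fin N => fun ω => ξ ω pr.1 pr.2) P)
    (hber : ∀ μ j, P {ω | ξ ω μ j = 1} = ENNReal.ofReal p)
    (i : Fin N) (hi : d ≤ (i : ℕ))
    (t h : ℝ) (ht : 0 ≤ t) (hh : 0 < h) :
    P {ω | h ≤ (∑ js ∈ Finset.univ.filter (fun js : Fin (n - 1) → Fin N =>
          Function.Injective js ∧ ∀ k, (js k : ℕ) < d),
        ∑ μ, ξ ω μ i * ∏ k, ξ ω μ (js k) : ℝ)}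
      ≤ ENNReal.ofReal (Real.exp (-(t * h) + M * p *
          ((1 - p ^ (n - 1) + p ^ (n - 1) *
              Real.exp (t * (n - 1).factorial * (d.choose (n - 1) : ℝ)
                / ((d / (n - 1) : ℕ) : ℝ))) ^ (d / (n - 1) : ℕ) - 1))) :=
  false_field_exponential_markov_general N d n M hn hd hdN p hp0 Ω P ξ hmeas h01 hindep hber i hi t
    h ht
end

section
/- Let κ ∈ (0,1), γ ∈ (0,1), δ ∈ (γ,1), n = κ log N (assumed integer), h = γ^{n-1}(log N)^{n-1}, p = (log N)/N, d = (2−δ) log N, and M = α^{n-1} exp( κ((log N)² − log N log log N) ) with α > 0 so small that κ log( (2−δ)α/γ ) < −2. Let ξ^1,…,ξ^M ∈ {0,1}^N have i.i.d. Bernoulli(p) coordinates and set A_δ = { |Σ_{j=1}^N ξ_j^1 − log N| ≤ (1−δ) log N }. Then there exists c > 1 such that for all sufficiently large N and every coordinate i, P( T_i(ξ^1) ≠ ξ_i^1, ξ_i^1 = 0, A_δ ) ≤ N^{−c}, where T is the dynamics with Hebbian weights of order n and threshold h. -/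
open MeasureTheory ProbabilityTheory Filter

noncomputable section

/-- The Heaviside function `Θ(x) = 1_{x > 0}`. -/
def hstep (x : ℝ) : ℕ := if 0 < x then 1 else 0

/-- The Hebbian weight of order `n`:
`W_{i, j₁, …, j_{n-1}} = ∑_μ ξ_i^μ ξ_{j₁}^μ ⋯ ξ_{j_{n-1}}^μ`. -/
def hebbW {N M : ℕ} (n : ℕ) (ξ : Fin M → Fin N → ℕ) (i : Fin N)
    (js : Fin (n - 1) → Fin N) : ℕ :=
  ∑ μ : Fin M, ξ μ i * ∏ k : Fin (n - 1), ξ μ (js k)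

open Classical in
/-- The local field at site `i` for weights `W` of order `n`:
`∑*_{j₁,…,j_{n-1} pairwise distinct} σ_{j₁} ⋯ σ_{j_{n-1}} W_{i,j₁,…,j_{n-1}}`. -/
def sparseField {N : ℕ} (n : ℕ) (W : Fin N → (Fin (n - 1) → Fin N) → ℕ)
    (σ : Fin N → ℕ) (i : Fin N) : ℕ :=
  ∑ js ∈ Finset.univ.filter (fun js : Fin (n - 1) → Fin N => Function.Injective js),
    (∏ k, σ (js k)) * W i js

/-- One step of the retrieval dynamics with threshold `h`:
`T_i(σ) = Θ(local field − h)`. -/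
def sparseT {N : ℕ} (n : ℕ) (W : Fin N → (Fin (n - 1) → Fin N) → ℕ)
    (h : ℝ) (σ : Fin N → ℕ) (i : Fin N) : ℕ :=
  hstep ((sparseField n W σ i : ℝ) - h)

/-!
When `ξ¹ᵢ = 0`, the local field at `i` is the sum, over injective `j : Fin (n-1) → Fin N`
avoiding `i` and over patterns `μ ≠ 1`, of the products `ξ^μ_i ∏ₖ ξ¹_{jₖ} ξ^μ_{jₖ}` of
`2(n-1)+1` distinct independent Bernoulli(`p`) coordinates. A flip forces this field above `h`,
so by Markov's inequality the probability is at most `N^(n-1) M p^(2n-1) / h`. With `L = log N`,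
the `κL²` in `log M` cancels against the `-nL` of `N^(n-1) p^(2n-1)` up to at most `L`, the
`log L` terms add up to `(n - κL) log L ≤ 0`, and the smallness of `α` gives
`(n-1) log(α/γ) ≤ -(2 + κ log(2-δ)) L + O(1)`; hence the bound is `N^(-c)` with
`c = 1 + κ log(2-δ)/2` once `L` is large.
-/

open scoped ENNReal
open Finset

section Combinatorics

variable {M N m : ℕ}

def termSites (ν μ : Fin M) (i : Fin N) (js : Fin m → Fin N) : Finset (Fin M × Fin N) :=
  insert (μ, i) (univ.image (fun k => (ν, js k)) ∪ univ.image (fun k => (μ, js k)))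

@[to_additive]
theorem prod_termSites {β : Type*} [CommMonoid β] (f : Fin M × Fin N → β) {ν μ : Fin M}
    {i : Fin N} {js : Fin m → Fin N} (hμ : μ ≠ ν) (hjs : Function.Injective js)
    (hi : ∀ k, js k ≠ i) :
    ∏ s ∈ termSites ν μ i js, f s = f (μ, i) * ((∏ k, f (ν, js k)) * ∏ k, f (μ, js k)) := by
  have hinj : ∀ ρ : Fin M, Function.Injective fun k => (ρ, js k) :=
    fun ρ a b hab => hjs (congrArg Prod.snd hab)
  have hdisj : Disjoint (univ.image fun k => (ν, js k)) (univ.image fun k => (μ, js k)) := by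
    simp only [disjoint_left, mem_image, mem_univ, true_and]
    rintro _ ⟨k, rfl⟩ ⟨k', hk'⟩
    exact hμ (congrArg Prod.fst hk')
  have hnotMem : (μ, i) ∉ univ.image (fun k => (ν, js k)) ∪ univ.image (fun k => (μ, js k)) := by
    simp only [mem_union, mem_image, mem_univ, true_and, Prod.mk.injEq, not_or, not_exists,
      not_and]
    exact ⟨fun k h _ => hμ h.symm, hi⟩
  rw [termSites, prod_insert hnotMem, prod_union hdisj, prod_image fun a _ b _ h => hinj ν h,
    prod_image fun a _ b _ h => hinj μ h]

theorem card_termSites {ν μ : Fin M} {i : Fin N} {js : Fin m → Fin N} (hμ : μ ≠ ν)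
    (hjs : Function.Injective js) (hi : ∀ k, js k ≠ i) :
    #(termSites ν μ i js) = 2 * m + 1 := by
  rw [card_eq_sum_ones, sum_termSites _ hμ hjs hi]
  simp only [sum_const, card_univ, Fintype.card_fin, smul_eq_mul, mul_one]
  ring

def avoidingInjections (m : ℕ) (i : Fin N) : Finset (Fin m → Fin N) :=
  univ.filter fun js => Function.Injective js ∧ ∀ k, js k ≠ i

theorem card_avoidingInjections_le (i : Fin N) : #(avoidingInjections m i) ≤ N ^ m :=
  (card_filter_le _ _).trans (by simp)

theorem sparseField_hebbW_eq_sum_prod {n : ℕ} (ξ : Fin M → Fin N → ℕ) {ν : Fin M} {i : Fin N}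
    (hξ : ξ ν i = 0) :
    sparseField n (hebbW n ξ) (ξ ν) i =
      ∑ js ∈ avoidingInjections (n - 1) i, ∑ μ ∈ univ.erase ν,
        ∏ s ∈ termSites ν μ i js, ξ s.1 s.2 := by
  simp only [sparseField, hebbW, mul_sum]
  rw [avoidingInjections, ← filter_filter,
    ← sum_filter_of_ne (p := fun js : Fin (n - 1) → Fin N => ∀ k, js k ≠ i)]
  · refine sum_congr rfl fun js hjs => ?_
    obtain ⟨hjs, hi⟩ := (mem_filter.mp hjs).imp_left fun h => (mem_filter.mp h).2
    rw [← sum_erase (a := ν) _ (by simp [hξ])]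
    refine sum_congr rfl fun μ hμ => ?_
    rw [prod_termSites _ (ne_of_mem_erase hμ) hjs hi]
    ring
  · intro js _ hne k hk
    refine hne (sum_eq_zero fun μ _ => ?_)
    rw [prod_eq_zero (mem_univ k) (by rw [hk, hξ]), zero_mul]

end Combinatorics

section Probability

variable {Ω : Type*} [MeasurableSpace Ω] {P : Measure Ω}

theorem lintegral_natCast_eq_measure_of_le_one {f : Ω → ℕ} (hf : Measurable f)
    (hf01 : ∀ ω, f ω ≤ 1) : ∫⁻ ω, (f ω : ℝ≥0∞) ∂P = P {ω | f ω = 1} := by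
  have hind : (fun ω => (f ω : ℝ≥0∞)) = {ω | f ω = 1}.indicator 1 := by
    ext ω
    rcases Nat.le_one_iff_eq_zero_or_eq_one.mp (hf01 ω) with h | h <;> simp [h]
  rw [hind]
  exact lintegral_indicator_one (hf (measurableSet_singleton 1))

theorem lintegral_prod_natCast_eq_prod_measure {ι : Type*} {f : ι → Ω → ℕ}
    (hf : ∀ s, Measurable (f s)) (hf01 : ∀ s ω, f s ω ≤ 1)
    (hindep : iIndepFun (m := fun _ => (⊤ : MeasurableSpace ℕ)) f P) (S : Finset ι) :
    ∫⁻ ω, ∏ s ∈ S, (f s ω : ℝ≥0∞) ∂P = ∏ s ∈ S, P {ω | f s ω = 1} := by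
  have hindep' : iIndepFun (fun s ω => (f s ω : ℝ≥0∞)) P :=
    hindep.comp (fun _ k => (k : ℝ≥0∞)) fun _ => measurable_from_top
  rw [lintegral_prod_eq_prod_lintegral_of_indepFun S _ hindep'
      fun s => (measurable_of_countable _).comp (hf s)]
  exact prod_congr rfl fun s _ => lintegral_natCast_eq_measure_of_le_one (hf s) (hf01 s)

theorem lt_sparseField_of_sparseT_ne_zero {N n : ℕ} {W : Fin N → (Fin (n - 1) → Fin N) → ℕ}
    {h : ℝ} {σ : Fin N → ℕ} {i : Fin N} (hT : sparseT n W h σ i ≠ 0) :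
    h < sparseField n W σ i := by
  by_contra hle
  exact hT (if_neg (by linarith))

theorem lintegral_sum_prod_termSites_le {M N : ℕ} (ξ : Ω → Fin M → Fin N → ℕ)
    (hmeas : ∀ μ i, Measurable fun ω => ξ ω μ i) (h01 : ∀ ω μ i, ξ ω μ i ≤ 1)
    (hindep : iIndepFun (m := fun _ => (⊤ : MeasurableSpace ℕ))
      (fun s : Fin M × Fin N => fun ω => ξ ω s.1 s.2) P)
    {p : ℝ≥0∞} (hber : ∀ μ i, P {ω | ξ ω μ i = 1} = p) (m : ℕ) (ν : Fin M) (i : Fin N) :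
    ∫⁻ ω, ∑ js ∈ avoidingInjections m i, ∑ μ ∈ univ.erase ν,
        ∏ s ∈ termSites ν μ i js, (ξ ω s.1 s.2 : ℝ≥0∞) ∂P ≤
      (N ^ m * M) * p ^ (2 * m + 1) :=
  calc _ = ∑ js ∈ avoidingInjections m i, ∑ μ ∈ univ.erase ν,
          ∫⁻ ω, ∏ s ∈ termSites ν μ i js, (ξ ω s.1 s.2 : ℝ≥0∞) ∂P := by
        rw [lintegral_finsetSum _ fun js _ => by fun_prop]
        exact sum_congr rfl fun js _ => lintegral_finsetSum _ fun μ _ => by fun_prop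
    _ = ∑ js ∈ avoidingInjections m i, ∑ μ ∈ univ.erase ν, p ^ (2 * m + 1) := by
        refine sum_congr rfl fun js hjs => sum_congr rfl fun μ hμ => ?_
        obtain ⟨hinj, hi⟩ := (mem_filter.mp hjs).2
        refine (lintegral_prod_natCast_eq_prod_measure
          (f := fun (s : Fin M × Fin N) ω => ξ ω s.1 s.2) (fun s => hmeas s.1 s.2)
          (fun s ω => h01 ω s.1 s.2) hindep _).trans ?_
        rw [prod_congr rfl fun s _ => hber s.1 s.2, prod_const,
          card_termSites (ne_of_mem_erase hμ) hinj hi]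
    _ ≤ (N ^ m * M) * p ^ (2 * m + 1) := by
        simp only [sum_const, card_erase_of_mem (mem_univ ν), card_univ, Fintype.card_fin,
          nsmul_eq_mul, ← mul_assoc]
        gcongr
        · exact_mod_cast card_avoidingInjections_le i
        · exact_mod_cast Nat.sub_le M 1

theorem measure_flip_of_eq_zero_le {M N : ℕ} (ξ : Ω → Fin M → Fin N → ℕ)
    (hmeas : ∀ μ i, Measurable fun ω => ξ ω μ i) (h01 : ∀ ω μ i, ξ ω μ i ≤ 1)
    (hindep : iIndepFun (m := fun _ => (⊤ : MeasurableSpace ℕ))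
      (fun s : Fin M × Fin N => fun ω => ξ ω s.1 s.2) P)
    {p : ℝ} (hp : 0 ≤ p) (hber : ∀ μ i, P {ω | ξ ω μ i = 1} = ENNReal.ofReal p)
    (n : ℕ) (ν : Fin M) (i : Fin N) {h : ℝ} (hh : 0 < h) :
    P {ω | sparseT n (hebbW n (ξ ω)) h (ξ ω ν) i ≠ ξ ω ν i ∧ ξ ω ν i = 0} ≤
      ENNReal.ofReal ((N : ℝ) ^ (n - 1) * M * p ^ (2 * (n - 1) + 1) / h) := by
  set Y : Ω → ℝ≥0∞ := fun ω => ∑ js ∈ avoidingInjections (n - 1) i, ∑ μ ∈ univ.erase ν,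
    ∏ s ∈ termSites ν μ i js, (ξ ω s.1 s.2 : ℝ≥0∞) with hY
  have hYmeas : Measurable Y := by
    simp only [hY]
    fun_prop
  have hsub : {ω | sparseT n (hebbW n (ξ ω)) h (ξ ω ν) i ≠ ξ ω ν i ∧ ξ ω ν i = 0} ⊆
      {ω | ENNReal.ofReal h ≤ Y ω} := by
    rintro ω ⟨hflip, hzero⟩
    have hfield := lt_sparseField_of_sparseT_ne_zero (hzero ▸ hflip)
    rw [sparseField_hebbW_eq_sum_prod _ hzero] at hfield
    calc ENNReal.ofReal h ≤ ENNReal.ofReal _ := ENNReal.ofReal_le_ofReal hfield.le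
      _ = Y ω := by rw [ENNReal.ofReal_natCast]; push_cast; rfl
  calc P _ ≤ P {ω | ENNReal.ofReal h ≤ Y ω} := measure_mono hsub
    _ ≤ (∫⁻ ω, Y ω ∂P) / ENNReal.ofReal h :=
        meas_ge_le_lintegral_div hYmeas.aemeasurable (by simpa using hh) ENNReal.ofReal_ne_top
    _ ≤ (N ^ (n - 1) * M) * ENNReal.ofReal p ^ (2 * (n - 1) + 1) / ENNReal.ofReal h := by
        gcongr
        exact lintegral_sum_prod_termSites_le ξ hmeas h01 hindep hber (n - 1) ν i
    _ = _ := by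
        rw [ENNReal.ofReal_div_of_pos hh, ENNReal.ofReal_mul (by positivity),
          ENNReal.ofReal_mul (by positivity), ENNReal.ofReal_pow hp,
          ENNReal.ofReal_pow (by positivity), ENNReal.ofReal_natCast, ENNReal.ofReal_natCast]

end Probability

section Asymptotics

open Real

theorem expected_flips_exponent_le {κ d t L m : ℝ} (hκ : 0 < κ) (hd : 0 < d) (ht : κ * (d + t) ≤ -2)
    (hL : 1 ≤ L) (hm_lo : κ * L - 2 ≤ m) (hm_hi : m + 1 ≤ κ * L)
    (hL_large : 4 / κ + 2 * d ≤ κ * d / 2 * L) :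
    m * L + m * t + κ * (L ^ 2 - L * log L) + (2 * m + 1) * (log L - L) - m * log L ≤
      -(1 + κ * d / 2) * L := by
  set s := 2 / κ + d with hs
  have hκs : κ * s = 2 + κ * d := by rw [hs]; field_simp
  have hts : t ≤ -s := by
    rw [← mul_le_mul_iff_of_pos_left hκ]
    linarith
  have hκL : 4 ≤ κ * L := by
    have : 0 < 4 / κ := by positivity
    nlinarith
  have h1 : 0 ≤ m * (-s - t) := mul_nonneg (by linarith) (by linarith)
  have h2 : 0 ≤ (m - (κ * L - 2)) * s := mul_nonneg (by linarith) (by positivity)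
  have h3 : 0 ≤ (κ * L - (m + 1)) * log L := mul_nonneg (by linarith) (log_nonneg hL)
  have h4 : (κ * L - (m + 1)) * L ≤ 1 * L := mul_le_mul_of_nonneg_right (by linarith) (by linarith)
  have h5 : κ * L * s = (2 + κ * d) * L := by rw [mul_right_comm, hκs]
  have h6 : 2 * s = 4 / κ + 2 * d := by rw [hs]; ring
  linarith

theorem pow_eq_exp_mul_log {x : ℝ} (hx : 0 < x) (k : ℕ) : x ^ k = exp (k * log x) := by
  rw [← log_pow, exp_log (pow_pos hx k)]

theorem expected_flips_div_threshold_le {κ b α γ x M : ℝ} {m : ℕ} (hκ : 0 < κ) (hb : 1 < b)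
    (hα : 0 < α) (hγ : 0 < γ) (hbαγ : κ * log (b * α / γ) ≤ -2) (hx : 0 < x)
    (hL : 1 ≤ log x) (hm_lo : κ * log x - 2 ≤ m) (hm_hi : m + 1 ≤ κ * log x)
    (hL_large : 4 / κ + 2 * log b ≤ κ * log b / 2 * log x)
    (hM : M ≤ α ^ m * exp (κ * (log x ^ 2 - log x * log (log x)))) :
    x ^ m * M * (log x / x) ^ (2 * m + 1) / (γ ^ m * log x ^ m) ≤
      x ^ (-(1 + κ * log b / 2)) := by
  set L := log x with hLx
  have hL0 : 0 < L := by linarith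
  have hlogbαγ : log (b * α / γ) = log b + (log α - log γ) := by
    rw [log_div (by positivity) hγ.ne', log_mul (by positivity) hα.ne']
    ring
  have hlogp : log (L / x) = log L - L := log_div hL0.ne' hx.ne'
  have hexponent :=
    expected_flips_exponent_le hκ (log_pos hb) (hlogbαγ ▸ hbαγ) hL hm_lo hm_hi hL_large
  calc x ^ m * M * (L / x) ^ (2 * m + 1) / (γ ^ m * L ^ m)
      ≤ x ^ m * (α ^ m * exp (κ * (L ^ 2 - L * log L))) * (L / x) ^ (2 * m + 1) /
          (γ ^ m * L ^ m) := by gcongr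
    _ = exp (m * L + m * (log α - log γ) + κ * (L ^ 2 - L * log L) +
          (2 * m + 1) * (log L - L) - m * log L) := by
        rw [pow_eq_exp_mul_log hx m, pow_eq_exp_mul_log hα m, pow_eq_exp_mul_log hγ m,
          pow_eq_exp_mul_log hL0 m, pow_eq_exp_mul_log (div_pos hL0 hx), hlogp, ← exp_add,
          ← exp_add, ← exp_add, ← exp_add, ← exp_sub, ← hLx]
        push_cast
        ring_nf
    _ ≤ exp (-(1 + κ * log b / 2) * L) := exp_le_exp.mpr hexponent
    _ = x ^ (-(1 + κ * log b / 2)) := by rw [rpow_def_of_pos hx, mul_comm]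

theorem eventually_expected_flips_div_threshold_le {κ b α γ : ℝ} (hκ : 0 < κ) (hb : 1 < b)
    (hα : 0 < α) (hγ : 0 < γ) (hbαγ : κ * log (b * α / γ) ≤ -2) {n M : ℕ → ℕ}
    (hn : ∀ N, n N = ⌊κ * log N⌋₊)
    (hM : ∀ N, (M N : ℝ) ≤ α ^ (n N - 1) * exp (κ * (log N ^ 2 - log N * log (log N)))) :
    ∀ᶠ N : ℕ in atTop, 0 < γ ^ (n N - 1) * log N ^ (n N - 1) ∧
      (N : ℝ) ^ (n N - 1) * M N * (log N / N) ^ (2 * (n N - 1) + 1) /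
          (γ ^ (n N - 1) * log N ^ (n N - 1)) ≤ (N : ℝ) ^ (-(1 + κ * log b / 2)) := by
  have hlog : Tendsto (fun N : ℕ => log N) atTop atTop :=
    tendsto_log_atTop.comp tendsto_natCast_atTop_atTop
  have hlogb := log_pos hb
  filter_upwards [hlog.eventually_ge_atTop 1, hlog.eventually_ge_atTop (1 / κ),
    hlog.eventually_ge_atTop ((4 / κ + 2 * log b) / (κ * log b / 2)),
    eventually_gt_atTop 0] with N hL hLκ hL_large hN
  have hn_le : (n N : ℝ) ≤ κ * log N := hn N ▸ Nat.floor_le (by positivity)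
  have hn_gt : κ * log N < n N + 1 := hn N ▸ Nat.lt_floor_add_one _
  have hn1 : 1 ≤ n N := hn N ▸ Nat.le_floor (by push_cast; rwa [← div_le_iff₀' hκ])
  have hm : ((n N - 1 : ℕ) : ℝ) = n N - 1 := by rw [Nat.cast_sub hn1, Nat.cast_one]
  refine ⟨by positivity, expected_flips_div_threshold_le hκ hb hα hγ hbαγ (by positivity) hL
    (by rw [hm]; linarith) (by rw [hm]; linarith) ?_ (hM N)⟩
  rw [div_le_iff₀ (by positivity)] at hL_large
  linarith

end Asymptotics

theorem amari_log_order_zero_coordinate_error_bound_general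
    (κ : ℝ) (hκ0 : 0 < κ) (γ δ : ℝ) (hγ0 : 0 < γ)
    (hδ1 : δ < 1)
    (α : ℝ) (hα0 : 0 < α) (hα : κ * Real.log ((2 - δ) * α / γ) < -2)
    (n : ℕ → ℕ) (hn : ∀ N, n N = ⌊κ * Real.log N⌋₊)
    (Ω : ℕ → Type) [inst : ∀ N, MeasurableSpace (Ω N)]
    (P : ∀ N, Measure (Ω N))
    (M : ℕ → ℕ)
    (hMdef : ∀ N, M N = ⌊α ^ (n N - 1) *
      Real.exp (κ * (Real.log N ^ 2 - Real.log N * Real.log (Real.log N)))⌋₊)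
    (ξ : ∀ N : ℕ, Ω N → Fin (M N) → Fin N → ℕ)
    (hmeas : ∀ N μ i, Measurable fun ω => ξ N ω μ i)
    (h01 : ∀ N ω μ i, ξ N ω μ i ≤ 1)
    (hindep : ∀ N, iIndepFun (m := fun _ => ⊤)
      (fun p : Fin (M N) × Fin N => fun ω => ξ N ω p.1 p.2) (P N))
    (hber : ∀ N μ i, P N {ω | ξ N ω μ i = 1} = ENNReal.ofReal (Real.log N / N)) :
    ∃ c : ℝ, 1 < c ∧
      ∀ᶠ N : ℕ in atTop, ∀ h1 : 0 < M N, ∀ i : Fin N,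
        P N {ω |
            sparseT (n N) (hebbW (n N) (ξ N ω))
                (γ ^ (n N - 1) * Real.log N ^ (n N - 1)) (ξ N ω ⟨0, h1⟩) i
              ≠ ξ N ω ⟨0, h1⟩ i ∧
            ξ N ω ⟨0, h1⟩ i = 0 ∧
            |(∑ j, ξ N ω ⟨0, h1⟩ j : ℝ) - Real.log N| ≤ (1 - δ) * Real.log N}
          ≤ ENNReal.ofReal ((N : ℝ) ^ (-c)) := by
  have h2δ : 1 < 2 - δ := by linarith
  refine ⟨1 + κ * Real.log (2 - δ) / 2, by have := mul_pos hκ0 (Real.log_pos h2δ); linarith, ?_⟩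
  filter_upwards [eventually_expected_flips_div_threshold_le hκ0 h2δ hα0 hγ0 hα.le hn
    fun N => hMdef N ▸ Nat.floor_le (by positivity)] with N ⟨hh, hbound⟩ h1 i
  calc P N _ ≤ P N {ω | sparseT (n N) (hebbW (n N) (ξ N ω))
          (γ ^ (n N - 1) * Real.log N ^ (n N - 1)) (ξ N ω ⟨0, h1⟩) i ≠ ξ N ω ⟨0, h1⟩ i ∧
          ξ N ω ⟨0, h1⟩ i = 0} := measure_mono fun ω hω => ⟨hω.1, hω.2.1⟩
    _ ≤ _ := measure_flip_of_eq_zero_le (ξ N) (hmeas N) (h01 N) (hindep N) (by positivity)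
          (hber N) (n N) ⟨0, h1⟩ i hh
    _ ≤ _ := ENNReal.ofReal_le_ofReal hbound

/-- **Error bound for a zero coordinate in Amari's model with logarithmic interaction
order.**  Let `κ ∈ (0,1)`, `γ ∈ (0,1)`, `δ ∈ (γ,1)`, interaction order `n = κ log N`,
threshold `h = γ^{n-1} (log N)^{n-1}`, `p = (log N)/N`, and
`M = α^{n-1} exp(κ((log N)² − log N log log N))` with `α > 0` so small that
`κ log((2−δ)α/γ) < −2`.  With `A_δ = {|∑_j ξ_j¹ − log N| ≤ (1−δ) log N}`, there exists
`c > 1` such that for all sufficiently large `N` and every coordinate `i`,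
`P(T_i(ξ¹) ≠ ξ_i¹, ξ_i¹ = 0, A_δ) ≤ N^{−c}`. -/
theorem amari_log_order_zero_coordinate_error_bound
    (κ : ℝ) (hκ0 : 0 < κ) (hκ1 : κ < 1) (γ δ : ℝ) (hγ0 : 0 < γ) (hγ1 : γ < 1)
    (hδγ : γ < δ) (hδ1 : δ < 1)
    (α : ℝ) (hα0 : 0 < α) (hα : κ * Real.log ((2 - δ) * α / γ) < -2)
    (n : ℕ → ℕ) (hn : ∀ N, n N = ⌊κ * Real.log N⌋₊)
    (Ω : ℕ → Type) [inst : ∀ N, MeasurableSpace (Ω N)]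
    (P : ∀ N, Measure (Ω N)) (hP : ∀ N, IsProbabilityMeasure (P N))
    (M : ℕ → ℕ)
    (hMdef : ∀ N, M N = ⌊α ^ (n N - 1) *
      Real.exp (κ * (Real.log N ^ 2 - Real.log N * Real.log (Real.log N)))⌋₊)
    (ξ : ∀ N : ℕ, Ω N → Fin (M N) → Fin N → ℕ)
    (hmeas : ∀ N μ i, Measurable fun ω => ξ N ω μ i)
    (h01 : ∀ N ω μ i, ξ N ω μ i ≤ 1)
    (hindep : ∀ N, iIndepFun (m := fun _ => ⊤)
      (fun p : Fin (M N) × Fin N => fun ω => ξ N ω p.1 p.2) (P N))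
    (hber : ∀ N μ i, P N {ω | ξ N ω μ i = 1} = ENNReal.ofReal (Real.log N / N)) :
    ∃ c : ℝ, 1 < c ∧
      ∀ᶠ N : ℕ in atTop, ∀ h1 : 0 < M N, ∀ i : Fin N,
        P N {ω |
            sparseT (n N) (hebbW (n N) (ξ N ω))
                (γ ^ (n N - 1) * Real.log N ^ (n N - 1)) (ξ N ω ⟨0, h1⟩) i
              ≠ ξ N ω ⟨0, h1⟩ i ∧
            ξ N ω ⟨0, h1⟩ i = 0 ∧
            |(∑ j, ξ N ω ⟨0, h1⟩ j : ℝ) - Real.log N| ≤ (1 - δ) * Real.log N}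
          ≤ ENNReal.ofReal ((N : ℝ) ^ (-c)) :=
  amari_log_order_zero_coordinate_error_bound_general κ hκ0 γ δ hγ0 hδ1 α hα0 hα n hn Ω
    (inst := inst) P M hMdef ξ hmeas h01 hindep hber
end
end

section
/- Let κ > 0, let c = c(l) be a sequence with c ~ log l, let n = n(l) = κ c (assumed integer) and λ = λ(l) = (l−1)/c (assumed integer). Then C(λ, n−1) · c^{n−1} / C(l−1, n−1) → 1 as l → ∞. -/
/-!
Writing `a = ⌊b / c⌋`, the ratio `C(a, k) c^k / C(b, k)` is the product over `i < k` of
`(a - i) c / (b - i)`. Each factor is at most `1` because `a c ≤ b`, and at least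
`1 - k c / (b - k)` because `a c > b - c`, so Bernoulli's inequality squeezes the ratio between
`1 - k² c / (b - k)` and `1`. With `b = l - 1` and `k, c = O(log l)` the gap is
`O(log³ l / l) → 0`.
-/

open Filter Finset Asymptotics Topology

lemma choose_mul_pow_div_choose_eq_prod (a b c k : ℕ) :
    ((a.choose k : ℝ) * (c : ℝ) ^ k) / (b.choose k : ℝ)
      = ∏ i ∈ range k, ((a - i : ℕ) : ℝ) * c / ((b - i : ℕ) : ℝ) := by
  have hk : ((k.factorial : ℕ) : ℝ) ≠ 0 := by exact_mod_cast k.factorial_ne_zero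
  rw [prod_div_distrib, prod_mul_distrib, prod_const, ← Nat.cast_prod, ← Nat.cast_prod,
    ← Nat.descFactorial_eq_prod_range, ← Nat.descFactorial_eq_prod_range,
    Nat.descFactorial_eq_factorial_mul_choose, Nat.descFactorial_eq_factorial_mul_choose,
    card_range]
  push_cast
  rw [mul_assoc, mul_div_mul_left _ _ hk]

lemma cast_div_sub_mul_div_cast_sub_le_one (b c i : ℕ) :
    ((b / c - i : ℕ) : ℝ) * c / ((b - i : ℕ) : ℝ) ≤ 1 := by
  rcases c.eq_zero_or_pos with rfl | hc
  · simp
  refine div_le_one_of_le₀ ?_ (Nat.cast_nonneg _)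
  rw [← Nat.cast_mul, Nat.cast_le, Nat.sub_mul]
  exact tsub_le_tsub (Nat.div_mul_le_self b c) (Nat.le_mul_of_pos_right i hc)

lemma one_sub_mul_div_le_cast_div_sub_mul_div_cast_sub {b c i k : ℕ} (hc : 0 < c)
    (hik : i < k) (hkb : k < b) :
    1 - k * c / (b - k : ℝ) ≤ ((b / c - i : ℕ) : ℝ) * c / ((b - i : ℕ) : ℝ) := by
  have hbk : (0 : ℝ) < b - k := by rw [sub_pos]; exact_mod_cast hkb
  have hbi : (0 : ℝ) < b - i := by rw [sub_pos]; exact_mod_cast hik.trans hkb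
  have hik' : (i : ℝ) + 1 ≤ k := by exact_mod_cast hik
  have hdiv : (b : ℝ) < (b / c : ℕ) * c + c := by exact_mod_cast Nat.lt_div_mul_add hc
  have hsub : ((b / c : ℕ) : ℝ) - i ≤ ((b / c - i : ℕ) : ℝ) := by
    rcases le_total i (b / c) with h | h
    · rw [Nat.cast_sub h]
    · rw [Nat.sub_eq_zero_of_le h, Nat.cast_zero, sub_nonpos]
      exact_mod_cast h
  have hnum : (b - i : ℝ) - k * c ≤ ((b / c - i : ℕ) : ℝ) * c := by
    have hc' : (0 : ℝ) ≤ c := Nat.cast_nonneg c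
    nlinarith [mul_le_mul_of_nonneg_right hsub hc', mul_le_mul_of_nonneg_right hik' hc']
  rw [Nat.cast_sub (hik.trans hkb).le]
  calc 1 - k * c / (b - k : ℝ) ≤ 1 - k * c / (b - i : ℝ) := by gcongr
    _ = ((b - i) - k * c) / (b - i : ℝ) := by field_simp
    _ ≤ ((b / c - i : ℕ) : ℝ) * c / (b - i : ℝ) := by gcongr

lemma choose_div_mul_pow_div_choose_le_one (b c k : ℕ) :
    (((b / c).choose k : ℝ) * (c : ℝ) ^ k) / (b.choose k : ℝ) ≤ 1 := by
  rw [choose_mul_pow_div_choose_eq_prod]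
  exact prod_le_one (fun i _ => by positivity)
    (fun i _ => cast_div_sub_mul_div_cast_sub_le_one b c i)

lemma one_sub_sq_mul_div_le_choose_div_mul_pow_div_choose {b c k : ℕ} (hc : 0 < c)
    (hkb : k < b) :
    1 - (k : ℝ) ^ 2 * c / (b - k) ≤ (((b / c).choose k : ℝ) * (c : ℝ) ^ k) / (b.choose k : ℝ) := by
  set x : ℝ := k * c / (b - k)
  have hx : 0 ≤ x := div_nonneg (by positivity) (by rw [sub_nonneg]; exact_mod_cast hkb.le)
  have hkx : (k : ℝ) ^ 2 * c / (b - k) = k * x := by simp only [x]; ring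
  rw [hkx]
  rcases le_or_gt x 1 with hx1 | hx1
  · calc 1 - k * x = 1 + k * (-x) := by ring
      _ ≤ (1 + -x) ^ k := one_add_mul_le_pow (by linarith) k
      _ = ∏ _i ∈ range k, (1 - x) := by rw [prod_const, card_range, sub_eq_add_neg]
      _ ≤ _ := by
        rw [choose_mul_pow_div_choose_eq_prod]
        exact prod_le_prod (fun _ _ => by linarith) fun i hi =>
          one_sub_mul_div_le_cast_div_sub_mul_div_cast_sub hc (mem_range.mp hi) hkb
  · have hk : (1 : ℝ) ≤ k := by
      rcases k.eq_zero_or_pos with rfl | hk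
      · norm_num [x] at hx1
      · exact_mod_cast hk
    have : 0 ≤ (((b / c).choose k : ℝ) * (c : ℝ) ^ k) / (b.choose k : ℝ) := by positivity
    nlinarith

lemma natCast_sub_one_sub_isEquivalent {k : ℕ → ℝ} (hk : k =o[atTop] fun l => (l : ℝ)) :
    (fun l => ((l - 1 : ℕ) : ℝ) - k l) ~[atTop] fun l => (l : ℝ) := by
  refine IsLittleO.isEquivalent ?_
  have h1 : (fun _ => (1 : ℝ)) =o[atTop] fun l : ℕ => (l : ℝ) :=
    (isLittleO_one_left_iff ℝ).mpr (tendsto_norm_atTop_atTop.comp tendsto_natCast_atTop_atTop)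
  refine ((h1.add hk).neg_left).congr' ?_ EventuallyEq.rfl
  filter_upwards [eventually_ge_atTop 1] with l hl
  simp only [Pi.sub_apply, Nat.cast_sub hl, Nat.cast_one]
  ring

theorem tendsto_choose_div_mul_pow_div_choose_atTop {c k : ℕ → ℕ} (hc : ∀ᶠ l in atTop, 0 < c l)
    (hkc : (fun l => (k l : ℝ) ^ 2 * c l) =o[atTop] fun l => (l : ℝ)) :
    Tendsto (fun l => ((((l - 1) / c l).choose (k l) : ℝ) * (c l : ℝ) ^ k l)
      / ((l - 1).choose (k l) : ℝ)) atTop (𝓝 1) := by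
  have hk : (fun l => (k l : ℝ)) =o[atTop] fun l => (l : ℝ) := by
    refine (IsBigO.of_bound 1 ?_).trans_isLittleO hkc
    filter_upwards [hc] with l hl
    rw [one_mul, Real.norm_natCast, Real.norm_of_nonneg (by positivity)]
    exact_mod_cast (Nat.le_self_pow two_ne_zero (k l)).trans (Nat.le_mul_of_pos_right _ hl)
  have hden := natCast_sub_one_sub_isEquivalent hk
  have hkb : ∀ᶠ l in atTop, k l < l - 1 := by
    filter_upwards [(hden.symm.tendsto_atTop tendsto_natCast_atTop_atTop).eventually_gt_atTop 0]
      with l hl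
    exact_mod_cast sub_pos.mp hl
  have hgap := (hkc.trans_isBigO hden.symm.isBigO).tendsto_div_nhds_zero
  refine tendsto_of_tendsto_of_tendsto_of_le_of_le' (by simpa using hgap.const_sub 1)
    tendsto_const_nhds ?_ (Eventually.of_forall fun l => choose_div_mul_pow_div_choose_le_one _ _ _)
  filter_upwards [hc, hkb] with l hcl hkl
  exact one_sub_sq_mul_div_le_choose_div_mul_pow_div_choose hcl hkl

/-- **Binomial asymptotics in the GB model with logarithmic interaction order.**
Let `κ > 0`, let `c = c(l) ~ log l`, `n = n(l) = κ c` and `λ = λ(l) = (l−1)/c` (both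
taken as integers).  Then `C(λ, n−1) c^{n−1} / C(l−1, n−1) → 1` as `l → ∞`. -/
theorem gb_binomial_ratio_tendsto_one
    (κ : ℝ) (hκ : 0 < κ) (c : ℕ → ℕ)
    (hc : Tendsto (fun l => (c l : ℝ) / Real.log l) atTop (nhds 1)) :
    Tendsto
      (fun l : ℕ =>
        ((((l - 1) / c l).choose (⌊κ * (c l : ℝ)⌋₊ - 1) : ℝ)
            * (c l : ℝ) ^ (⌊κ * (c l : ℝ)⌋₊ - 1))
          / ((l - 1).choose (⌊κ * (c l : ℝ)⌋₊ - 1) : ℝ))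
      atTop (nhds 1) := by
  have hc_pos : ∀ᶠ l in atTop, 0 < c l := by
    filter_upwards [hc.eventually (lt_mem_nhds one_pos)] with l hl
    exact Nat.pos_of_ne_zero fun h => by simp [h] at hl
  have hc_log : (fun l => (c l : ℝ)) =O[atTop] fun l => Real.log l :=
    (isEquivalent_of_tendsto_one hc).isBigO
  have hk_log : (fun l => ((⌊κ * (c l : ℝ)⌋₊ - 1 : ℕ) : ℝ)) =O[atTop] fun l => Real.log l := by
    refine (IsBigO.of_bound κ (Eventually.of_forall fun l => ?_)).trans hc_log
    rw [Real.norm_natCast, Real.norm_natCast]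
    calc ((⌊κ * (c l : ℝ)⌋₊ - 1 : ℕ) : ℝ) ≤ ⌊κ * (c l : ℝ)⌋₊ := by exact_mod_cast Nat.sub_le _ 1
      _ ≤ κ * c l := Nat.floor_le (by positivity)
  have hlog : (fun l : ℕ => Real.log l ^ 3) =o[atTop] fun l => (l : ℝ) :=
    Real.isLittleO_pow_log_id_atTop.comp_tendsto tendsto_natCast_atTop_atTop
  refine tendsto_choose_div_mul_pow_div_choose_atTop hc_pos (IsBigO.trans_isLittleO ?_ hlog)
  exact ((hk_log.pow 2).mul hc_log).congr_right fun l => by ring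
end
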